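/- arXiv:2507.00471 — 2 statements merged into one kernel-verified Lean document; each statement's English description precedes it below -/
import Mathlib

section
/- Let n ≥ 1, let w : Fin n → ℝ satisfy w(i) ≥ 1 for all i, and for λ > 0 define the dilation δ_λ : ℝⁿ → ℝⁿ by (δ_λ x)ᵢ = λ^{w(i)}·xᵢ. Let Y : ℝⁿ → ℝⁿ be locally Lipschitz and satisfy the homogeneity property Y(δ_λ x) = λ⁻¹ · δ_λ(Y(x)) for all λ > 0 and x ∈ ℝⁿ. If γ : ℝ → ℝⁿ is differentiable with γ′(t) = Y(γ(t)) for all t ∈ ℝ and γ(0) = 0, then γ(t) = δ_λ(γ(t/λ)) for all t ∈ ℝ and all λ > 0. -/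
/-!
The dilation `δ_λ` conjugates `Y` to `λ⁻¹ • Y`, so `t ↦ δ_λ (γ (t / λ))` is again an integral
curve of `Y`, and it starts at `δ_λ 0 = 0 = γ 0`. Integral curves of a locally Lipschitz field
are unique (the set where two of them agree is clopen in `ℝ`), so the two curves coincide.
-/

open Filter Topology

section

variable {E : Type*} [NormedAddCommGroup E] [NormedSpace ℝ E] {Y : E → E} {f g : ℝ → E}

theorem ODE_solution_eventuallyEq_of_locallyLipschitz (hY : LocallyLipschitz Y)
    (hf : ∀ t, HasDerivAt f (Y (f t)) t) (hg : ∀ t, HasDerivAt g (Y (g t)) t) {t₀ : ℝ}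
    (heq : f t₀ = g t₀) : f =ᶠ[𝓝 t₀] g := by
  obtain ⟨K, s, hs, hK⟩ := hY (f t₀)
  have hfs : ∀ᶠ t in 𝓝 t₀, HasDerivAt f (Y (f t)) t ∧ f t ∈ s := by
    filter_upwards [(hf t₀).continuousAt.preimage_mem_nhds hs] with t ht using ⟨hf t, ht⟩
  have hgs : ∀ᶠ t in 𝓝 t₀, HasDerivAt g (Y (g t)) t ∧ g t ∈ s := by
    filter_upwards [(hg t₀).continuousAt.preimage_mem_nhds (heq ▸ hs)] with t ht using ⟨hg t, ht⟩
  exact ODE_solution_unique_of_eventually (.of_forall fun _ => hK) hfs hgs heq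

theorem ODE_solution_unique_of_locallyLipschitz (hY : LocallyLipschitz Y)
    (hf : ∀ t, HasDerivAt f (Y (f t)) t) (hg : ∀ t, HasDerivAt g (Y (g t)) t) {t₀ : ℝ}
    (heq : f t₀ = g t₀) : f = g := by
  have hclosed : IsClosed {t | f t = g t} :=
    isClosed_eq (continuous_iff_continuousAt.mpr fun t => (hf t).continuousAt)
      (continuous_iff_continuousAt.mpr fun t => (hg t).continuousAt)
  have hopen : IsOpen {t | f t = g t} :=
    isOpen_iff_mem_nhds.mpr fun _ ht => ODE_solution_eventuallyEq_of_locallyLipschitz hY hf hg ht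
  funext t
  exact Set.eq_univ_iff_forall.mp (IsClopen.eq_univ ⟨hclosed, hopen⟩ ⟨t₀, heq⟩) t

theorem hasDerivAt_map_comp_mul_of_conj (hf : ∀ t, HasDerivAt f (Y (f t)) t) (L : E →L[ℝ] E)
    {c : ℝ} (hL : ∀ x, Y (L x) = c • L (Y x)) (t : ℝ) :
    HasDerivAt (fun s => L (f (c * s))) (Y (L (f (c * t)))) t := by
  have hspeed : HasDerivAt (fun s => f (c * s)) (c • Y (f (c * t))) t := by
    simpa [Function.comp_def] using (hf (c * t)).scomp t ((hasDerivAt_id t).const_mul c)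
  simpa [Function.comp_def, hL] using L.hasFDerivAt.comp_hasDerivAt t hspeed

end

noncomputable def weightedDilation {ι : Type*} (w : ι → ℝ) (lam : ℝ) : (ι → ℝ) →L[ℝ] (ι → ℝ) :=
  ContinuousLinearMap.pi fun i => lam ^ w i • ContinuousLinearMap.proj i

@[simp]
theorem weightedDilation_apply {ι : Type*} (w : ι → ℝ) (lam : ℝ) (x : ι → ℝ) :
    weightedDilation w lam x = fun i => lam ^ w i * x i :=
  rfl

theorem statement2_general (n : ℕ) (w : Fin n → ℝ)
    (Y : (Fin n → ℝ) → (Fin n → ℝ)) (hY : LocallyLipschitz Y)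
    (hhom : ∀ lam : ℝ, 0 < lam → ∀ x : Fin n → ℝ,
      Y (fun i => lam ^ (w i) * x i) = lam⁻¹ • fun i => lam ^ (w i) * Y x i)
    (γ : ℝ → Fin n → ℝ) (hγ : ∀ t : ℝ, HasDerivAt γ (Y (γ t)) t)
    (h0 : γ 0 = 0) :
    ∀ t : ℝ, ∀ lam : ℝ, 0 < lam →
      γ t = fun i => lam ^ (w i) * γ (t / lam) i := by
  intro t lam hlam
  have hconj : ∀ x, Y (weightedDilation w lam x) = lam⁻¹ • weightedDilation w lam (Y x) :=
    hhom lam hlam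
  have hrescaled := hasDerivAt_map_comp_mul_of_conj hγ (weightedDilation w lam) hconj
  have hstart : γ 0 = weightedDilation w lam (γ (lam⁻¹ * 0)) := by rw [mul_zero, h0, map_zero]
  have hcurves := ODE_solution_unique_of_locallyLipschitz hY hγ hrescaled hstart
  simpa [div_eq_inv_mul] using congrFun hcurves t

/-- Blow-up = dilation for flows: if `Y` is locally Lipschitz and `1`-homogeneous with
respect to the weighted dilations `δ_λ(x)ᵢ = λ^{w i} xᵢ` (with weights `w i ≥ 1`), i.e.
`Y(δ_λ x) = λ⁻¹ · δ_λ(Y x)`, and `γ` is an integral curve of `Y` with `γ(0) = 0`, then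
`γ(t) = δ_λ(γ(t/λ))` for all `t ∈ ℝ` and `λ > 0`. -/
theorem statement2 (n : ℕ) (hn : 1 ≤ n) (w : Fin n → ℝ) (hw : ∀ i, 1 ≤ w i)
    (Y : (Fin n → ℝ) → (Fin n → ℝ)) (hY : LocallyLipschitz Y)
    (hhom : ∀ lam : ℝ, 0 < lam → ∀ x : Fin n → ℝ,
      Y (fun i => lam ^ (w i) * x i) = lam⁻¹ • fun i => lam ^ (w i) * Y x i)
    (γ : ℝ → Fin n → ℝ) (hγ : ∀ t : ℝ, HasDerivAt γ (Y (γ t)) t)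
    (h0 : γ 0 = 0) :
    ∀ t : ℝ, ∀ lam : ℝ, 0 < lam →
      γ t = fun i => lam ^ (w i) * γ (t / lam) i :=
  statement2_general n w Y hY hhom γ hγ h0
end

section
/- For every r > 0 one has −f″(r)/f(r) − G″(r)/G(r) > 0; equivalently, G″(r)/G(r) < (r² + 6)/(4(r² + 1)²), where f(r) = r·(1+r²)^(−1/4) and G(r) = r/arctan r. -/
noncomputable def f (r : ℝ) : ℝ := r * (1 + r ^ 2) ^ (-(1 / 4 : ℝ))

noncomputable def G (r : ℝ) : ℝ := r / Real.arctan r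

/-!
Both ratios are explicit: `f''/f = -(r² + 6)/(4(1 + r²)²)` and
`G''/G = 2(r - arctan r)/(r (1 + r²)² arctan² r)`. So the claim reduces to
`8(r - arctan r) < (r² + 6) r arctan² r`, which follows from the Padé-type lower bound
`arctan r ≥ 3r/(3 + r²)` (the difference is monotone, with derivative
`4r⁴/((1 + r²)(3 + r²)²)`): substituting it turns the inequality into `8(3 + r²) < 9(r² + 6)`.
-/

open Real

lemma hasDerivAt_one_add_sq (x : ℝ) : HasDerivAt (fun y : ℝ => 1 + y ^ 2) (2 * x) x := by
  simpa using (hasDerivAt_pow 2 x).const_add 1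

lemma hasDerivAt_one_add_sq_rpow (p x : ℝ) :
    HasDerivAt (fun y : ℝ => (1 + y ^ 2) ^ p) (2 * x * p * (1 + x ^ 2) ^ (p - 1)) x :=
  (hasDerivAt_one_add_sq x).rpow_const (Or.inl (by positivity))

lemma hasDerivAt_f (x : ℝ) :
    HasDerivAt f ((1 + x ^ 2 / 2) * (1 + x ^ 2) ^ (-(5 / 4 : ℝ))) x := by
  have hu : (1 + x ^ 2) ^ (-(1 / 4 : ℝ)) = (1 + x ^ 2) ^ (-(5 / 4 : ℝ)) * (1 + x ^ 2) := by
    rw [← rpow_add_one (by positivity)]; norm_num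
  refine ((hasDerivAt_id' x).fun_mul (hasDerivAt_one_add_sq_rpow (-(1 / 4)) x)).congr_deriv ?_
  rw [hu]; norm_num; ring

lemma deriv_f : deriv f = fun x => (1 + x ^ 2 / 2) * (1 + x ^ 2) ^ (-(5 / 4 : ℝ)) :=
  funext fun x => (hasDerivAt_f x).deriv

lemma deriv_deriv_f (x : ℝ) :
    deriv (deriv f) x = -(x * (x ^ 2 + 6) / 4) * (1 + x ^ 2) ^ (-(9 / 4 : ℝ)) := by
  have hu : (1 + x ^ 2) ^ (-(5 / 4 : ℝ)) = (1 + x ^ 2) ^ (-(9 / 4 : ℝ)) * (1 + x ^ 2) := by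
    rw [← rpow_add_one (by positivity)]; norm_num
  have hpoly : HasDerivAt (fun y : ℝ => 1 + y ^ 2 / 2) x x := by
    simpa using ((hasDerivAt_pow 2 x).div_const 2).const_add 1
  rw [deriv_f, (hpoly.fun_mul (hasDerivAt_one_add_sq_rpow (-(5 / 4)) x)).deriv, hu]
  norm_num; ring

lemma deriv_deriv_f_div_f {x : ℝ} (hx : x ≠ 0) :
    deriv (deriv f) x / f x = -((x ^ 2 + 6) / (4 * (x ^ 2 + 1) ^ 2)) := by
  have hu : (1 + x ^ 2) ^ (-(1 / 4 : ℝ)) = (1 + x ^ 2) ^ (-(9 / 4 : ℝ)) * (1 + x ^ 2) ^ 2 := by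
    rw [← rpow_two (1 + x ^ 2), ← rpow_add (by positivity)]; norm_num
  have hpos : 0 < (1 + x ^ 2) ^ (-(9 / 4 : ℝ)) := by positivity
  rw [deriv_deriv_f, f, hu]
  field_simp
  ring

lemma hasDerivAt_G {x : ℝ} (hx : x ≠ 0) :
    HasDerivAt G ((arctan x - x / (1 + x ^ 2)) / arctan x ^ 2) x := by
  have ha : arctan x ≠ 0 := by simpa using hx
  refine ((hasDerivAt_id' x).fun_div (hasDerivAt_arctan x) ha).congr_deriv ?_
  field_simp

lemma hasDerivAt_deriv_G {x : ℝ} (hx : x ≠ 0) :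
    HasDerivAt (deriv G) (2 * (x - arctan x) / ((1 + x ^ 2) ^ 2 * arctan x ^ 3)) x := by
  have ha : arctan x ≠ 0 := by simpa using hx
  have hu : 1 + x ^ 2 ≠ 0 := by positivity
  have hnum :=
    (hasDerivAt_arctan x).fun_sub ((hasDerivAt_id' x).fun_div (hasDerivAt_one_add_sq x) hu)
  have hquot := hnum.fun_div ((hasDerivAt_arctan x).fun_pow 2) (pow_ne_zero 2 ha)
  have heq : deriv G =ᶠ[nhds x] fun y => (arctan y - y / (1 + y ^ 2)) / arctan y ^ 2 := by
    filter_upwards [isOpen_ne.mem_nhds hx] with y hy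
    exact (hasDerivAt_G hy).deriv
  refine (hquot.congr_of_eventuallyEq heq).congr_deriv ?_
  field_simp
  ring

lemma deriv_deriv_G_div_G {x : ℝ} (hx : x ≠ 0) :
    deriv (deriv G) x / G x = 2 * (x - arctan x) / (x * (1 + x ^ 2) ^ 2 * arctan x ^ 2) := by
  have ha : arctan x ≠ 0 := by simpa using hx
  rw [(hasDerivAt_deriv_G hx).deriv, G]
  field_simp

lemma div_le_arctan {x : ℝ} (hx : 0 ≤ x) : 3 * x / (3 + x ^ 2) ≤ arctan x := by
  have hderiv (y : ℝ) : HasDerivAt (fun y => arctan y - 3 * y / (3 + y ^ 2))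
      (4 * y ^ 4 / ((1 + y ^ 2) * (3 + y ^ 2) ^ 2)) y := by
    have hden : HasDerivAt (fun y : ℝ => 3 + y ^ 2) (2 * y) y := by
      simpa using (hasDerivAt_pow 2 y).const_add 3
    refine ((hasDerivAt_arctan y).fun_sub
      (((hasDerivAt_id' y).const_mul 3).fun_div hden (by positivity))).congr_deriv ?_
    field_simp
    ring
  have hmono : Monotone fun y => arctan y - 3 * y / (3 + y ^ 2) :=
    monotone_of_deriv_nonneg (fun y => (hderiv y).differentiableAt)
      fun y => (hderiv y).deriv ▸ by positivity
  simpa using hmono hx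

lemma sub_arctan_lt {x : ℝ} (hx : 0 < x) :
    8 * (x - arctan x) < (x ^ 2 + 6) * x * arctan x ^ 2 := by
  set b := 3 * x / (3 + x ^ 2) with hb
  have hba : b ≤ arctan x := div_le_arctan hx.le
  have hb0 : 0 ≤ b := by positivity
  calc 8 * (x - arctan x) ≤ 8 * (x - b) := by linarith
    _ < (x ^ 2 + 6) * x * b ^ 2 := by
      rw [hb]; field_simp; nlinarith [pow_pos hx 3, pow_pos hx 5]
    _ ≤ (x ^ 2 + 6) * x * arctan x ^ 2 := by gcongr

lemma deriv_deriv_G_div_G_lt {x : ℝ} (hx : 0 < x) :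
    deriv (deriv G) x / G x < (x ^ 2 + 6) / (4 * (x ^ 2 + 1) ^ 2) := by
  have ha : 0 < arctan x := arctan_pos.mpr hx
  rw [deriv_deriv_G_div_G hx.ne', div_lt_div_iff₀ (by positivity) (by positivity)]
  nlinarith [mul_lt_mul_of_pos_right (sub_arctan_lt hx) (by positivity : 0 < (1 + x ^ 2) ^ 2)]

/-- For `f(r) = r·(1+r²)^{-1/4}` and `G(r) = r/arctan r`:
`−f″/f − G″/G > 0`, equivalently `G″/G < (r²+6)/(4(r²+1)²)`, for all `r > 0`. -/
theorem statement7 :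
    ∀ r : ℝ, 0 < r →
      (-(deriv (deriv f) r / f r) - deriv (deriv G) r / G r > 0 ∧
       deriv (deriv G) r / G r < (r ^ 2 + 6) / (4 * (r ^ 2 + 1) ^ 2)) := by
  intro r hr
  have hG := deriv_deriv_G_div_G_lt hr
  refine ⟨?_, hG⟩
  rw [deriv_deriv_f_div_f hr.ne']
  linarith
end
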